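/- arXiv:2401.03574 — 2 statements merged into one kernel-verified Lean document; each statement's English description precedes it below -/
import Mathlib

section
/- Let k be a field with char k ≠ p such that k* = (k*)^p. For r ≥ 1 define F_r = ⋃_{m≥0} k((x₁^{1/p^m}, …, x_r^{1/p^m})) (the union of iterated Laurent series fields). Then F_r* is p-divisible. -/
/-!
Every nonzero element of `F_r` comes from some `F_{r,m}`, and inside `F_{r,m+1}` it becomes
`c · x^{pγ} · (1 + v)` with `c ∈ k*` and `v` of positive order: the substitution
`x_i ↦ x_i^p` multiplies all exponents by `p`. Each factor is a `p`-th power: `c` by hypothesis,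
`x^{pγ} = (x^γ)^p`, and `1 + v` because Hensel's lemma gives a `p`-th root of `1 + X` in `k⟦X⟧`
(as `p` is invertible in `k`), into which `v` may be substituted.
-/

namespace AmitsurNote

noncomputable instance instLinOrdLexPi (r : ℕ) : LinearOrder (Lex (Fin r → ℤ)) :=
  letI : WellFoundedLT (Fin r) := inferInstance
  inferInstance

noncomputable instance instLOACGLexPi (r : ℕ) : IsOrderedAddMonoid (Lex (Fin r → ℤ)) :=
  inferInstance

/-- The iterated Laurent series field `k((x₁,…,x_r))`, realized as the field of
Hahn series over the lexicographically ordered group `ℤ^r`. -/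
def IterLaurent (k : Type) [Field k] (r : ℕ) : Type := HahnSeries (Lex (Fin r → ℤ)) k

noncomputable instance (k : Type) [Field k] (r : ℕ) : Field (IterLaurent k r) :=
  inferInstanceAs (Field (HahnSeries (Lex (Fin r → ℤ)) k))

/-- Multiplication of all exponents by `n`. -/
def expMulHom (r n : ℕ) : Lex (Fin r → ℤ) →+ Lex (Fin r → ℤ) where
  toFun a := toLex fun i => (n : ℤ) * ofLex a i
  map_zero' := congrArg toLex (funext fun i => mul_zero _)
  map_add' a b := congrArg toLex (funext fun i => mul_add _ _ _)

lemma expMulHom_injective (r n : ℕ) (hn : 0 < n) : Function.Injective (expMulHom r n) := by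
  intro a b h
  apply ofLex.injective
  funext i
  have := congrFun (congrArg ofLex h) i
  simp only [expMulHom, AddMonoidHom.coe_mk, ZeroHom.coe_mk] at this
  exact mul_left_cancel₀ (by exact_mod_cast hn.ne' : (n : ℤ) ≠ 0) this

lemma expMulHom_strictMono (r n : ℕ) (hn : 0 < n) : StrictMono (expMulHom r n) := by
  intro a b h
  obtain ⟨i, h1, h2⟩ := h
  refine ⟨i, fun j hj => ?_, ?_⟩
  · show (n : ℤ) * ofLex a j = (n : ℤ) * ofLex b j
    rw [show ofLex a j = ofLex b j from h1 j hj]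
  · exact mul_lt_mul_of_pos_left h2 (by simpa using hn)

lemma expMulHom_le (r n : ℕ) (hn : 0 < n) :
    ∀ a b : Lex (Fin r → ℤ), expMulHom r n a ≤ expMulHom r n b ↔ a ≤ b :=
  fun _ _ => (expMulHom_strictMono r n hn).le_iff_le

/-- The ring embedding `k((x₁,…,x_r)) → k((x₁,…,x_r))` sending each variable `xᵢ` to `xᵢⁿ`. -/
noncomputable def Phi (k : Type) [Field k] (r n : ℕ) (hn : 0 < n) :
    IterLaurent k r →+* IterLaurent k r :=
  HahnSeries.embDomainRingHom (expMulHom r n) (expMulHom_injective r n hn) (expMulHom_le r n hn)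

end AmitsurNote

theorem Nat.Prime.cast_ne_zero_of_ringChar_ne {R : Type*} [NonAssocSemiring R] [Nontrivial R]
    {p : ℕ} (hp : p.Prime) (h : ringChar R ≠ p) : (p : R) ≠ 0 := by
  rw [Ne, ringChar.spec]
  intro hdvd
  rcases hp.eq_one_or_self_of_dvd _ hdvd with h1 | hp'
  · exact CharP.ringChar_ne_one h1
  · exact h hp'

namespace PowerSeries

theorem exists_pow_eq_one_add_X {R : Type*} [CommRing R] {n : ℕ} (hn : n ≠ 0)
    (hnR : IsUnit (n : R)) : ∃ S : R⟦X⟧, S ^ n = 1 + X := by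
  set f : Polynomial R⟦X⟧ := Polynomial.X ^ n - Polynomial.C (1 + X)
  have hf1 : f.eval 1 ∈ Ideal.span {X} := by
    simp [f]
  have hf'1 : IsUnit (Ideal.Quotient.mk (Ideal.span {X}) (f.derivative.eval 1)) := by
    have hn' : IsUnit (n : R⟦X⟧) := by simpa using hnR.map (C (R := R))
    simpa [f, Polynomial.derivative_X_pow] using hn'.map (Ideal.Quotient.mk _)
  obtain ⟨S, hS, -⟩ :=
    HenselianRing.is_henselian f (Polynomial.monic_X_pow_sub_C _ hn) 1 hf1 hf'1
  exact ⟨S, sub_eq_zero.mp (by simpa [f] using hS)⟩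

end PowerSeries

namespace HahnSeries

section CommRing

variable {Γ R : Type*} [AddCommMonoid Γ] [LinearOrder Γ] [IsOrderedCancelAddMonoid Γ] [CommRing R]

theorem exists_pow_eq_of_orderTop_sub_one_pos {n : ℕ} (hn : n ≠ 0) (hnR : IsUnit (n : R))
    {x : R⟦Γ⟧} (hx : 0 < (x - 1).orderTop) : ∃ y, y ^ n = x := by
  obtain ⟨S, hS⟩ := PowerSeries.exists_pow_eq_one_add_X hn hnR
  refine ⟨PowerSeries.heval (x - 1) S, ?_⟩
  rw [← map_pow, hS, map_add, map_one, PowerSeries.heval_X _ hx, add_sub_cancel]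

end CommRing

section Field

variable {Γ K : Type*} [AddCommGroup Γ] [LinearOrder Γ] [IsOrderedAddMonoid Γ] [Field K]

theorem orderTop_single_mul_sub_one_pos {x : K⟦Γ⟧} (hx : x ≠ 0) :
    0 < (single (-x.order) x.leadingCoeff⁻¹ * x - 1).orderTop := by
  rw [← orderTop_neg, neg_sub]
  exact unit_aux x (inv_mul_cancel₀ (leadingCoeff_ne_zero.mpr hx)) _ (neg_add_cancel _)

theorem exists_pow_eq_of_leadingCoeff_of_order {n : ℕ} (hn : (n : K) ≠ 0) {x : K⟦Γ⟧} {b : K}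
    (hb : b ^ n = x.leadingCoeff) {γ : Γ} (hγ : n • γ = x.order) : ∃ y, y ^ n = x := by
  have hn0 : n ≠ 0 := by rintro rfl; exact hn Nat.cast_zero
  rcases eq_or_ne x 0 with rfl | hx
  · exact ⟨0, zero_pow hn0⟩
  obtain ⟨z, hz⟩ := exists_pow_eq_of_orderTop_sub_one_pos hn0 (IsUnit.mk0 _ hn)
    (orderTop_single_mul_sub_one_pos hx)
  refine ⟨single γ b * z, ?_⟩
  rw [mul_pow, single_pow, hz, hb, hγ, ← mul_assoc, single_mul_single, add_neg_cancel,
    mul_inv_cancel₀ (leadingCoeff_ne_zero.mpr hx), single_zero_one, one_mul]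

end Field

section EmbDomain

variable {Γ Γ' R : Type*} [LinearOrder Γ] [LinearOrder Γ'] [Zero Γ] [Zero Γ'] [Zero R]
  {f : Γ ↪o Γ'} {x : HahnSeries Γ R}

theorem order_embDomain (hx : x ≠ 0) : (embDomain f x).order = f x.order := by
  have hfx : embDomain f x ≠ 0 := fun h => hx (embDomain_injective (h.trans embDomain_zero.symm))
  apply WithTop.coe_injective
  rw [order_eq_orderTop_of_ne_zero hfx, orderTop_embDomain, ← order_eq_orderTop_of_ne_zero hx,
    WithTop.map_coe]

theorem leadingCoeff_embDomain : (embDomain f x).leadingCoeff = x.leadingCoeff := by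
  rcases eq_or_ne x 0 with rfl | hx
  · rw [embDomain_zero, leadingCoeff_zero, leadingCoeff_zero]
  · rw [leadingCoeff_eq, leadingCoeff_eq, order_embDomain hx, embDomain_coeff]

end EmbDomain

end HahnSeries

namespace AmitsurNote

theorem expMulHom_apply (r n : ℕ) (γ : Lex (Fin r → ℤ)) : expMulHom r n γ = n • γ := by
  apply ofLex.injective
  funext i
  exact (nsmul_eq_mul n (ofLex γ i)).symm

section Phi

variable {k : Type} [Field k] {r n : ℕ} (hn : 0 < n) {x : IterLaurent k r}

theorem order_Phi (hx : x ≠ 0) : HahnSeries.order (Phi k r n hn x) = n • HahnSeries.order x :=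
  (HahnSeries.order_embDomain hx).trans (expMulHom_apply r n _)

theorem leadingCoeff_Phi :
    HahnSeries.leadingCoeff (Phi k r n hn x) = HahnSeries.leadingCoeff x :=
  HahnSeries.leadingCoeff_embDomain

theorem exists_pow_eq_Phi (hnk : (n : k) ≠ 0) (hdiv : ∀ a : k, a ≠ 0 → ∃ b : k, b ^ n = a)
    (x : IterLaurent k r) : ∃ y, y ^ n = Phi k r n hn x := by
  rcases eq_or_ne x 0 with rfl | hx
  · exact ⟨0, by rw [map_zero, zero_pow hn.ne']⟩
  obtain ⟨b, hb⟩ := hdiv _ (HahnSeries.leadingCoeff_ne_zero.mpr hx)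
  exact HahnSeries.exists_pow_eq_of_leadingCoeff_of_order hnk
    (hb.trans (leadingCoeff_Phi hn).symm) (order_Phi hn hx).symm

end Phi

/-- `F_r` is presented as a field `F` with embeddings `φ m` of `F_{r,m} ≅ k((x₁,…,x_r))` whose
ranges cover `F`; compatibility says that `xᵢ` in `F_{r,m}` is `xᵢ ^ p` in `F_{r,m+1}`. -/
theorem union_iterated_laurent_p_divisible_general (p r : ℕ) (hp : p.Prime)
    (k : Type) [Field k] (hchar : ringChar k ≠ p)
    (hdiv : ∀ a : k, a ≠ 0 → ∃ b : k, b ^ p = a)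
    (F : Type) [Field F] (φ : ℕ → (IterLaurent k r →+* F))
    (hcompat : ∀ m, φ m = (φ (m + 1)).comp (Phi k r p hp.pos))
    (hcover : ∀ a : F, ∃ m f, φ m f = a) :
    ∀ a : F, a ≠ 0 → ∃ b : F, b ^ p = a := by
  intro a _
  obtain ⟨m, f, rfl⟩ := hcover a
  obtain ⟨y, hy⟩ := exists_pow_eq_Phi hp.pos (hp.cast_ne_zero_of_ringChar_ne hchar) hdiv f
  exact ⟨φ (m + 1) y, by rw [← map_pow, hy, hcompat m, RingHom.comp_apply]⟩

/-- Let `k` be a field with `char k ≠ p`, `k* = (k*)^p` and `ω_p ∈ k`.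
Let `F_r = ⋃_{m ≥ 0} k((x₁^{1/p^m}, …, x_r^{1/p^m}))`, presented as a field `F` with
compatible embeddings `φ m : k((x₁,…,x_r)) → F` (realizing `F_{r,m}`; the compatibility maps
each variable of `F_{r,m}` to the `p`-th power of the corresponding variable of `F_{r,m+1}`)
whose ranges cover `F`.  Then `F_r*` is `p`-divisible. -/
theorem union_iterated_laurent_p_divisible (p r : ℕ) (hp : p.Prime) (hr : 1 ≤ r)
    (k : Type) [Field k] (hchar : ringChar k ≠ p)
    (hdiv : ∀ a : k, a ≠ 0 → ∃ b : k, b ^ p = a) (ω : k) (hω : IsPrimitiveRoot ω p)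
    (F : Type) [Field F] (φ : ℕ → (IterLaurent k r →+* F))
    (hcompat : ∀ m, φ m = (φ (m + 1)).comp (Phi k r p hp.pos))
    (hcover : ∀ a : F, ∃ m f, φ m f = a) :
    ∀ a : F, a ≠ 0 → ∃ b : F, b ^ p = a :=
  union_iterated_laurent_p_divisible_general p r hp k hchar hdiv F φ hcompat hcover

end AmitsurNote
end

section
/- Let Δ = Δ_{2r}(k; n₁,…,n_r) be as above, with its natural valuation v: Δ* → ℤ^{2r} (lexicographic order) and M_Δ = {g : v(g) > 0}. Then the commutator subgroup Δ*' of the unit group satisfies Δ*' ⊆ ⟨ω_m⟩ · (1 + M_Δ). -/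
/-!
The principal units `1 + M_Δ` form a normal subgroup, and modulo them every unit is a central
scalar times a monomial `x^α`. Two monomials `x^α x^β` and `x^β x^α` are both `x^(α+β)` up to a
power of the central element `ω_m`, so `Δ*` becomes abelian modulo `⟨ω_m⟩ · (1 + M_Δ)`, which
therefore contains the commutator subgroup.
-/

namespace AmitsurNote

noncomputable instance instMinLexPi (r : ℕ) : Min (Lex (Fin r → ℤ)) :=
  (instLinOrdLexPi r).toMin

/-- An abstract model of the iterated twisted Laurent series division ring
`Δ = Δ_{2r}(k; n₁,…,n_r)` together with its natural valuation `v` with values in the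
lexicographically ordered group `ℤ^{2r}`: every series is `a·x^α·(1 + d)` with `a ∈ k*`,
`α = v(f)`, and `v(d) > 0`; the monomials `x^α` multiply up to powers of the fixed root of
unity `ω = ω_m`. -/
structure TwistedLaurentValuedModel (k : Type*) [Field k] (r : ℕ) (ω : k) where
  Δ : Type*
  [instΔ : DivisionRing Δ]
  ι : k →+* Δ
  central : ∀ (a : k) (z : Δ), ι a * z = z * ι a
  /-- the unit `ω_m` of `Δ`. -/
  ωu : Δˣ
  hωu : (ωu : Δ) = ι ω
  /-- the natural valuation of `Δ` (with junk value at `0`). -/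
  v : Δ → Lex (Fin (2 * r) → ℤ)
  v_mul : ∀ x y : Δ, x ≠ 0 → y ≠ 0 → v (x * y) = v x + v y
  v_add : ∀ x y : Δ, x ≠ 0 → y ≠ 0 → x + y ≠ 0 → min (v x) (v y) ≤ v (x + y)
  v_scalar : ∀ a : k, a ≠ 0 → v (ι a) = 0
  /-- the monomial `x^α`. -/
  M : (Fin (2 * r) → ℤ) → Δˣ
  v_M : ∀ α, v (M α) = toLex α
  M_twist : ∀ α β, ∃ e : ℤ, M α * M β = ωu ^ e * M (α + β)
  factor : ∀ u : Δˣ, ∃ (a : k) (α : Fin (2 * r) → ℤ) (d : Δ),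
    (d = 0 ∨ 0 < v d) ∧ (u : Δ) = ι a * (M α : Δ) * (1 + d)

attribute [instance] TwistedLaurentValuedModel.instΔ

section GroupTheory

variable {G : Type*} [Group G]

theorem zpowers_normal_of_mem_center {z : G} (hz : z ∈ Subgroup.center G) :
    (Subgroup.zpowers z).Normal :=
  ⟨fun x hx g => by
    rw [(Subgroup.mem_center_iff.mp (Subgroup.zpowers_le.mpr hz hx) g), mul_inv_cancel_right]
    exact hx⟩

theorem commute_mk_of_mem_center (N : Subgroup G) [N.Normal] {z : G}
    (hz : z ∈ Subgroup.center G) (x : G ⧸ N) : Commute (z : G ⧸ N) x := by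
  induction x using QuotientGroup.induction_on with
  | H y => exact (Commute.map (Subgroup.mem_center_iff.mp hz y) (QuotientGroup.mk' N)).symm

theorem commutator_le_of_commute_mk (N : Subgroup G) [N.Normal]
    (h : ∀ g₁ g₂ : G, Commute (g₁ : G ⧸ N) g₂) : commutator G ≤ N := by
  rw [commutator_def, Subgroup.commutator_le]
  intro g₁ _ g₂ _
  rw [← QuotientGroup.eq_one_iff, ← QuotientGroup.mk'_apply, map_commutatorElement,
    commutatorElement_eq_one_iff_commute]
  exact h g₁ g₂

end GroupTheory

namespace TwistedLaurentValuedModel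

variable {k : Type*} [Field k] {r : ℕ} {ω : k} (T : TwistedLaurentValuedModel k r ω)

theorem v_one : T.v 1 = 0 := by
  simpa using T.v_scalar 1 one_ne_zero

theorem v_neg (d : T.Δ) : T.v (-d) = T.v d := by
  rcases eq_or_ne d 0 with rfl | hd
  · rw [neg_zero]
  have h : (-d : T.Δ) = T.ι (-1) * d := by simp
  rw [h, T.v_mul _ _ (by simp) hd, T.v_scalar _ (by simp), zero_add]

theorem v_units_inv (u : T.Δˣ) : T.v ↑u⁻¹ = -T.v u := by
  rw [eq_neg_iff_add_eq_zero, add_comm, ← T.v_mul _ _ u.ne_zero u⁻¹.ne_zero, Units.mul_inv,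
    v_one]

theorem v_add_eq_left_of_lt {x y : T.Δ} (hx : x ≠ 0) (hy : y ≠ 0) (hxy : T.v x < T.v y) :
    T.v (x + y) = T.v x := by
  have hsum : x + y ≠ 0 := fun h => by
    rw [eq_neg_of_add_eq_zero_right h, v_neg] at hxy
    exact lt_irrefl _ hxy
  refine le_antisymm ?_ (by simpa [min_eq_left hxy.le] using T.v_add x y hx hy hsum)
  have h := T.v_add (x + y) (-y) hsum (neg_ne_zero.mpr hy) (by simpa using hx)
  rw [add_neg_cancel_right, v_neg] at h
  exact (min_le_iff.mp h).resolve_right hxy.not_ge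

/-- `M_Δ`, with `0` listed separately because `T.v 0` is a junk value. -/
def maxIdeal : AddSubgroup T.Δ where
  carrier := {d | d = 0 ∨ 0 < T.v d}
  zero_mem' := Or.inl rfl
  add_mem' {d₁ d₂} h₁ h₂ := by
    rcases eq_or_ne d₁ 0 with rfl | hd₁
    · rwa [zero_add]
    rcases eq_or_ne d₂ 0 with rfl | hd₂
    · rwa [add_zero]
    rcases eq_or_ne (d₁ + d₂) 0 with h | h
    · exact Or.inl h
    exact Or.inr <| (lt_min (h₁.resolve_left hd₁) (h₂.resolve_left hd₂)).trans_le
      (T.v_add d₁ d₂ hd₁ hd₂ h)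
  neg_mem' {d} h := by
    rcases h with rfl | h
    · exact Or.inl neg_zero
    · exact Or.inr (by rwa [v_neg])

theorem mem_maxIdeal {d : T.Δ} : d ∈ T.maxIdeal ↔ d = 0 ∨ 0 < T.v d := Iff.rfl

theorem mul_mem_maxIdeal_of_nonneg {d x : T.Δ} (hd : d ∈ T.maxIdeal) (hx : 0 ≤ T.v x) :
    d * x ∈ T.maxIdeal := by
  rcases eq_or_ne (d * x) 0 with h | h
  · exact Or.inl h
  rw [mem_maxIdeal, T.v_mul _ _ (left_ne_zero_of_mul h) (right_ne_zero_of_mul h)]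
  exact Or.inr (add_pos_of_pos_of_nonneg (hd.resolve_left (left_ne_zero_of_mul h)) hx)

theorem units_conj_mem_maxIdeal (g : T.Δˣ) {d : T.Δ} (hd : d ∈ T.maxIdeal) :
    (g : T.Δ) * d * ↑g⁻¹ ∈ T.maxIdeal := by
  rcases eq_or_ne d 0 with rfl | hd₀
  · simp [zero_mem]
  rw [mem_maxIdeal, T.v_mul _ _ (mul_ne_zero g.ne_zero hd₀) g⁻¹.ne_zero,
    T.v_mul _ _ g.ne_zero hd₀, v_units_inv, add_neg_cancel_comm]
  exact Or.inr (hd.resolve_left hd₀)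

theorem v_eq_zero_of_sub_one_mem {u : T.Δ} (hu : u - 1 ∈ T.maxIdeal) : T.v u = 0 := by
  rcases eq_or_ne (u - 1) 0 with h | h
  · rw [sub_eq_zero.mp h, v_one]
  have h₁ := T.v_add_eq_left_of_lt one_ne_zero h (by rw [v_one]; exact hu.resolve_left h)
  rwa [add_sub_cancel, v_one] at h₁

def principalUnits : Subgroup T.Δˣ where
  carrier := {u | (u : T.Δ) - 1 ∈ T.maxIdeal}
  one_mem' := by simp [zero_mem]
  mul_mem' {u w} hu hw := by
    have h : ((u * w : T.Δˣ) : T.Δ) - 1 = (u - 1) * w + (w - 1) := by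
      rw [Units.val_mul]; noncomm_ring
    change _ ∈ T.maxIdeal
    rw [h]
    exact add_mem (T.mul_mem_maxIdeal_of_nonneg hu (T.v_eq_zero_of_sub_one_mem hw).ge) hw
  inv_mem' {u} hu := by
    have h : ((u⁻¹ : T.Δˣ) : T.Δ) - 1 = -((u - 1) * ↑u⁻¹) := by
      rw [sub_mul, Units.mul_inv, one_mul, neg_sub]
    change _ ∈ T.maxIdeal
    rw [h]
    refine neg_mem (T.mul_mem_maxIdeal_of_nonneg hu ?_)
    rw [v_units_inv, T.v_eq_zero_of_sub_one_mem hu, neg_zero]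

theorem mem_principalUnits {u : T.Δˣ} : u ∈ T.principalUnits ↔ (u : T.Δ) - 1 ∈ T.maxIdeal :=
  Iff.rfl

instance principalUnits_normal : T.principalUnits.Normal :=
  ⟨fun u hu g => by
    have h : ((g * u * g⁻¹ : T.Δˣ) : T.Δ) - 1 = g * (u - 1) * ↑g⁻¹ := by
      rw [Units.val_mul, Units.val_mul, mul_sub, sub_mul, mul_one, Units.mul_inv]
    rw [mem_principalUnits, h]
    exact T.units_conj_mem_maxIdeal g hu⟩

theorem mem_center_of_val_eq_ι {u : T.Δˣ} {a : k} (h : (u : T.Δ) = T.ι a) :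
    u ∈ Subgroup.center T.Δˣ :=
  Subgroup.mem_center_iff.mpr fun g => Units.ext <| by
    rw [Units.val_mul, Units.val_mul, h, T.central]

theorem ωu_mem_center : T.ωu ∈ Subgroup.center T.Δˣ :=
  T.mem_center_of_val_eq_ι T.hωu

theorem exists_eq_central_mul_M_mul (u : T.Δˣ) :
    ∃ c ∈ Subgroup.center T.Δˣ, ∃ α, ∃ s ∈ T.principalUnits, u = c * T.M α * s := by
  obtain ⟨a, α, d, hd, hu⟩ := T.factor u
  have ha : a ≠ 0 := by
    rintro rfl
    exact u.ne_zero (by rw [hu, map_zero, zero_mul, zero_mul])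
  have hs : (1 : T.Δ) + d ≠ 0 := fun h => u.ne_zero (by rw [hu, h, mul_zero])
  refine ⟨Units.map (T.ι : k →* T.Δ) (Units.mk0 a ha), T.mem_center_of_val_eq_ι rfl, α,
    Units.mk0 _ hs, by simpa [mem_principalUnits, mem_maxIdeal] using hd, Units.ext ?_⟩
  simpa using hu

def omegaPrincipalUnits : Subgroup T.Δˣ :=
  Subgroup.zpowers T.ωu ⊔ T.principalUnits

instance omegaPrincipalUnits_normal : T.omegaPrincipalUnits.Normal :=
  haveI := zpowers_normal_of_mem_center T.ωu_mem_center
  Subgroup.sup_normal _ _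

open scoped Pointwise in
theorem mem_omegaPrincipalUnits {u : T.Δˣ} :
    u ∈ T.omegaPrincipalUnits ↔ ∃ e : ℤ, ∃ s ∈ T.principalUnits, T.ωu ^ e * s = u := by
  rw [omegaPrincipalUnits, ← SetLike.mem_coe, Subgroup.mul_normal, Set.mem_mul]
  simp only [SetLike.mem_coe, Subgroup.mem_zpowers_iff, exists_exists_eq_and]

theorem commute_mk_M (α β : Fin (2 * r) → ℤ) :
    Commute (T.M α : T.Δˣ ⧸ T.omegaPrincipalUnits) (T.M β) := by
  obtain ⟨e, he⟩ := T.M_twist α β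
  obtain ⟨e', he'⟩ := T.M_twist β α
  have hω : (T.ωu : T.Δˣ ⧸ T.omegaPrincipalUnits) = 1 :=
    (QuotientGroup.eq_one_iff _).mpr (Subgroup.mem_sup_left (Subgroup.mem_zpowers _))
  change ((T.M α * T.M β : T.Δˣ) : T.Δˣ ⧸ T.omegaPrincipalUnits) = ↑(T.M β * T.M α)
  simp only [he, he', add_comm β α, QuotientGroup.mk_mul, QuotientGroup.mk_zpow, hω, one_zpow,
    one_mul]

theorem commute_mk (g h : T.Δˣ) :
    Commute (g : T.Δˣ ⧸ T.omegaPrincipalUnits) (h : T.Δˣ ⧸ T.omegaPrincipalUnits) := by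
  obtain ⟨c, hc, α, s, hs, rfl⟩ := T.exists_eq_central_mul_M_mul g
  obtain ⟨c', hc', β, s', hs', rfl⟩ := T.exists_eq_central_mul_M_mul h
  have h₁ : ∀ t ∈ T.principalUnits, (t : T.Δˣ ⧸ T.omegaPrincipalUnits) = 1 := fun t ht =>
    (QuotientGroup.eq_one_iff _).mpr (Subgroup.mem_sup_right ht)
  simp only [QuotientGroup.mk_mul, h₁ s hs, h₁ s' hs', mul_one]
  exact (commute_mk_of_mem_center _ hc _).mul_left <|
    (commute_mk_of_mem_center _ hc' _).symm.mul_right (T.commute_mk_M α β)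

end TwistedLaurentValuedModel

theorem commutator_subgroup_bound_general (k : Type*) [Field k] (r : ℕ)
    (ω : k) (T : TwistedLaurentValuedModel k r ω) :
    ∀ u : T.Δˣ, u ∈ commutator T.Δˣ →
      ∃ (e : ℤ) (d : T.Δ), (d = 0 ∨ 0 < T.v d) ∧
        (u : T.Δ) = ((T.ωu ^ e : T.Δˣ) : T.Δ) * (1 + d) := by
  intro u hu
  obtain ⟨e, s, hs, rfl⟩ :=
    T.mem_omegaPrincipalUnits.mp (commutator_le_of_commute_mk _ T.commute_mk hu)
  exact ⟨e, (s : T.Δ) - 1, hs, by rw [Units.val_mul, add_sub_cancel]⟩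

/-- The commutator subgroup of `Δ*` for the iterated twisted Laurent
series division ring `Δ = Δ_{2r}(k; n₁,…,n_r)` is contained in `⟨ω_m⟩·(1 + M_Δ)`, where
`M_Δ = {g : v(g) > 0}`. -/
theorem commutator_subgroup_bound (k : Type*) [Field k] (r m : ℕ) (hm : 0 < m)
    (ω : k) (hω : IsPrimitiveRoot ω m) (T : TwistedLaurentValuedModel k r ω) :
    ∀ u : T.Δˣ, u ∈ commutator T.Δˣ →
      ∃ (e : ℤ) (d : T.Δ), (d = 0 ∨ 0 < T.v d) ∧
        (u : T.Δ) = ((T.ωu ^ e : T.Δˣ) : T.Δ) * (1 + d) :=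
  commutator_subgroup_bound_general k r ω T

end AmitsurNote
end
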